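/- arXiv:1808.08797 — 2 statements merged into one kernel-verified Lean document; each statement's English description precedes it below -/
import Mathlib

section
/- The number of d×d matrices with nonnegative integer entries all of whose permutation-diagonal sums equal N equals ∑_{k=1}^{d} (−1)^{k−1} C(d,k) C(N + 2d − k − 1, 2d − k − 1). -/
/-!
If every permutation sum of `A` is `N`, comparing `σ` with `σ ∘ (i k)` gives
`A i j + A k l = A i l + A k j`, so `A i j = r i + c j` for nonnegative vectors `r`, `c`;
the pair is unique once some `r i` vanishes, and then `N = ∑ r + ∑ c`. The matrices are thus
counted by the compositions of `N` into `2d` parts one of the first `d` of which vanishes, and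
inclusion–exclusion over the set of vanishing parts gives the alternating sum.
-/

open Finset Equiv

theorem Finset.sum_powerset_filter_nonempty_apply_card {β M : Type*} [AddCommMonoid M]
    (s : Finset β) (f : ℕ → M) :
    ∑ t ∈ s.powerset with t.Nonempty, f #t = ∑ k ∈ Icc 1 #s, (#s).choose k • f k := by
  rw [sum_filter]
  simp_rw [← card_pos]
  rw [sum_powerset_apply_card (fun k => if 0 < k then f k else 0),
    sum_range_eq_add_Ico _ (#s).succ_pos, Nat.succ_eq_add_one, Ico_add_one_right_eq_Icc]
  simp only [lt_irrefl, if_false, smul_zero, zero_add]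
  exact sum_congr rfl fun k hk => by rw [if_pos (show 0 < k from (mem_Icc.1 hk).1)]

section FinsuppAntidiag
variable {α : Type*} [Fintype α] [DecidableEq α]

theorem Finset.inf'_filter_finsuppAntidiag_eq_zero (n : ℕ) {t : Finset α} (ht : t.Nonempty) :
    t.inf' ht (fun i => {f ∈ (univ : Finset α).finsuppAntidiag n | f i = 0}) =
      (univ \ t).finsuppAntidiag n := by
  obtain ⟨i₀, hi₀⟩ := id ht
  ext f
  simp only [mem_inf' ht, mem_filter, mem_finsuppAntidiag', subset_univ, true_and, and_true,
    subset_sdiff, disjoint_left, Finsupp.mem_support_iff]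
  exact ⟨fun h => ⟨(h i₀ hi₀).1, fun a ha hat => ha (h a hat).2⟩,
    fun h i hi => ⟨h.1, not_not.1 fun hne => h.2 hne hi⟩⟩

theorem Finset.card_filter_finsuppAntidiag_exists_eq_zero (s : Finset α) (n : ℕ) :
    (#{f ∈ (univ : Finset α).finsuppAntidiag n | ∃ i ∈ s, f i = 0} : ℤ) =
      ∑ k ∈ Icc 1 #s,
        (-1 : ℤ) ^ (k + 1) * (#s).choose k * (Fintype.card α - k + n - 1).choose n := by
  have hunion : {f ∈ (univ : Finset α).finsuppAntidiag n | ∃ i ∈ s, f i = 0} =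
      s.biUnion fun i => {f ∈ (univ : Finset α).finsuppAntidiag n | f i = 0} := by
    ext f
    simp only [mem_filter, mem_biUnion]
    tauto
  rw [hunion, inclusion_exclusion_card_biUnion]
  simp_rw [inf'_filter_finsuppAntidiag_eq_zero, card_finsuppAntidiag_nat_eq_choose,
    card_univ_sdiff]
  rw [sum_coe_sort (s.powerset.filter (·.Nonempty))
      (fun t => (-1 : ℤ) ^ (#t + 1) * ((Fintype.card α - #t + n - 1).choose n : ℕ)),
    sum_powerset_filter_nonempty_apply_card s
      (fun k => (-1 : ℤ) ^ (k + 1) * ((Fintype.card α - k + n - 1).choose n : ℕ))]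
  exact sum_congr rfl fun k _ => by rw [nsmul_eq_mul]; ring

end FinsuppAntidiag

theorem Equiv.Perm.exists_apply_eq_and_apply_eq {n : Type*} [DecidableEq n] {i k j l : n}
    (hik : i ≠ k) (hjl : j ≠ l) : ∃ σ : Perm n, σ i = j ∧ σ k = l := by
  have hj : j ≠ swap i j k := by simpa using (swap i j).injective.ne hik
  exact ⟨(swap i j).trans (swap (swap i j k) l),
    by simp [swap_apply_of_ne_of_ne hj hjl], by simp⟩

namespace Matrix

section PermSums
variable {n R : Type*} [Fintype n] [DecidableEq n] [AddCancelCommMonoid R]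

theorem add_apply_eq_add_apply_swap (A : Matrix n n R) (σ : Perm n) {i k : n} (hik : i ≠ k)
    (hA : ∑ x, A x (σ x) = ∑ x, A x (σ (Equiv.swap i k x))) :
    A i (σ i) + A k (σ k) = A i (σ k) + A k (σ i) := by
  have hk : k ∈ univ.erase i := mem_erase.2 ⟨hik.symm, mem_univ k⟩
  rw [← add_sum_erase _ _ (mem_univ i), ← add_sum_erase _ _ hk,
    ← add_sum_erase _ _ (mem_univ i), ← add_sum_erase _ _ hk] at hA
  have hrest : ∑ x ∈ (univ.erase i).erase k, A x (σ (Equiv.swap i k x)) =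
      ∑ x ∈ (univ.erase i).erase k, A x (σ x) := by
    refine sum_congr rfl fun x hx => ?_
    rw [swap_apply_of_ne_of_ne (ne_of_mem_erase (mem_of_mem_erase hx)) (ne_of_mem_erase hx)]
  rw [swap_apply_left, swap_apply_right, hrest, ← add_assoc, ← add_assoc] at hA
  exact add_right_cancel hA

theorem add_eq_add_of_forall_sum_perm_eq {A : Matrix n n R} {N : R}
    (hA : ∀ σ : Perm n, ∑ i, A i (σ i) = N) (i k j l : n) :
    A i j + A k l = A i l + A k j := by
  rcases eq_or_ne i k with rfl | hik
  · exact add_comm _ _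
  rcases eq_or_ne j l with rfl | hjl
  · rfl
  obtain ⟨σ, rfl, rfl⟩ := Perm.exists_apply_eq_and_apply_eq hik hjl
  exact add_apply_eq_add_apply_swap A σ hik ((hA σ).trans (hA ((Equiv.swap i k).trans σ)).symm)

end PermSums

section OuterSum
variable {m n R : Type*}

def outerSum [Add R] (g : m ⊕ n → R) : Matrix m n R := of fun i j => g (.inl i) + g (.inr j)

theorem sum_outerSum_perm [Fintype n] [AddCommMonoid R] (g : n ⊕ n → R) (σ : Perm n) :
    ∑ i, outerSum g i (σ i) = ∑ x, g x := by
  simp only [outerSum, of_apply, sum_add_distrib, Fintype.sum_sum_type,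
    Equiv.sum_comp σ (fun j => g (.inr j))]

theorem exists_eq_outerSum_of_add_eq_add [Finite m] [Nonempty m] [Nonempty n] {A : Matrix m n ℕ}
    (hA : ∀ i k j l, A i j + A k l = A i l + A k j) :
    ∃ g : m ⊕ n → ℕ, (∃ i, g (.inl i) = 0) ∧ outerSum g = A := by
  obtain ⟨j₀⟩ := ‹Nonempty n›
  obtain ⟨i₀, hi₀⟩ := Finite.exists_min fun i => A i j₀
  refine ⟨Sum.elim (fun i => A i j₀ - A i₀ j₀) (fun j => A i₀ j),
    ⟨i₀, Nat.sub_self _⟩, ?_⟩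
  ext i j
  have := hA i i₀ j j₀
  have := hi₀ i
  simp only [outerSum, of_apply, Sum.elim_inl, Sum.elim_inr]
  omega

theorem eq_of_outerSum_eq [Nonempty n] {g g' : m ⊕ n → ℕ} (h : outerSum g = outerSum g')
    (hg : ∃ i, g (.inl i) = 0) (hg' : ∃ i, g' (.inl i) = 0) : g = g' := by
  obtain ⟨j₀⟩ := ‹Nonempty n›
  obtain ⟨z, hz⟩ := hg
  obtain ⟨z', hz'⟩ := hg'
  have hent (i : m) (j : n) : g (.inl i) + g (.inr j) = g' (.inl i) + g' (.inr j) :=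
    congrFun (congrFun h i) j
  have hrow (i : m) : g (.inl i) = g' (.inl i) := by
    have := hent i j₀; have := hent z j₀; have := hent z' j₀; omega
  funext x
  rcases x with i | j
  · exact hrow i
  · have := hent z j; have := hrow z; omega

theorem bijOn_outerSum [Fintype n] [DecidableEq n] [Nonempty n] (N : ℕ) :
    Set.BijOn (fun g : n ⊕ n →₀ ℕ => outerSum g)
      ↑({g ∈ (univ : Finset (n ⊕ n)).finsuppAntidiag N | ∃ i, g (.inl i) = 0} : Finset _)
      {A : Matrix n n ℕ | ∀ σ : Perm n, ∑ i, A i (σ i) = N} := by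
  refine ⟨fun g hg σ => ?_, fun g hg g' hg' hgg' => ?_, fun A hA => ?_⟩
  · simp only [mem_coe, mem_filter, mem_finsuppAntidiag] at hg
    rw [sum_outerSum_perm, ← hg.1.1]
  · simp only [mem_coe, mem_filter, mem_finsuppAntidiag] at hg hg'
    exact DFunLike.coe_injective (eq_of_outerSum_eq hgg' hg.2 hg'.2)
  · obtain ⟨g, hg, rfl⟩ :=
      exists_eq_outerSum_of_add_eq_add (add_eq_add_of_forall_sum_perm_eq hA)
    refine ⟨Finsupp.equivFunOnFinite.symm g, ?_, by simp⟩
    simp only [mem_coe, mem_filter, mem_finsuppAntidiag, Finsupp.coe_equivFunOnFinite_symm,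
      subset_univ, and_true]
    exact ⟨(sum_outerSum_perm g (Equiv.refl n)).symm.trans (hA _), hg⟩

end OuterSum

end Matrix

theorem stmt_11 (d N : ℕ) (hd : 1 ≤ d) :
    (Nat.card {A : Matrix (Fin d) (Fin d) ℕ |
        ∀ σ : Equiv.Perm (Fin d), ∑ i, A i (σ i) = N} : ℤ)
      = ∑ k ∈ Finset.Icc 1 d, (-1 : ℤ) ^ (k - 1) * (Nat.choose d k) *
          (Nat.choose (N + 2 * d - k - 1) (2 * d - k - 1)) := by
  have : Nonempty (Fin d) := ⟨⟨0, hd⟩⟩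
  rw [← Nat.card_congr (Matrix.bijOn_outerSum N).equiv, Nat.card_coe_set_eq,
    Set.ncard_coe_finset]
  convert card_filter_finsuppAntidiag_exists_eq_zero
    (univ.map (Function.Embedding.inl : Fin d ↪ Fin d ⊕ Fin d)) N using 1
  · congr 2
    ext g
    simp
  rw [card_map, card_univ, Fintype.card_sum, Fintype.card_fin]
  refine sum_congr rfl fun k hk => ?_
  obtain ⟨hk1, hkd⟩ := mem_Icc.1 hk
  rw [show k + 1 = k - 1 + 2 by omega, pow_add, neg_one_sq, mul_one,
    show N + 2 * d - k - 1 = 2 * d - k - 1 + N by omega,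
    show d + d - k + N - 1 = 2 * d - k - 1 + N by omega, Nat.choose_symm_add]
end

section
/- A nonnegative d×d real matrix A satisfies ⟨A, P_σ⟩ = 1 for every permutation matrix P_σ if and only if A lies in the convex hull of {R_1,...,R_d, C_1,...,C_d}. -/
/-!
Comparing a permutation `σ` with `σ ∘ (i i')` shows that equal permutation sums force
`A i j + A i' j' = A i j' + A i' j`, i.e. `A i j = a i + b j`. Shifting by the minimum of a column
makes `a, b ≥ 0`, and then `A = ∑ a i • R i + ∑ b j • C j` with total weight `∑ A i i = 1`.
Conversely every `R i` and `C j` has all permutation sums equal to `1`, an affine condition.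
-/

open Finset Equiv Set

theorem Equiv.Perm.exists_apply_eq_and_apply_eq_s17 {α : Type*} [DecidableEq α] {a a' b b' : α}
    (ha : a ≠ a') (hb : b ≠ b') : ∃ σ : Perm α, σ a = b ∧ σ a' = b' := by
  refine ⟨(swap a b).trans (swap (swap a b a') b'), ?_, swap_apply_left _ _⟩
  have hba : b ≠ swap a b a' := by simpa using (swap a b).injective.ne ha
  simp only [trans_apply, swap_apply_left]
  exact swap_apply_of_ne_of_ne hba hb

namespace Matrix

variable {m n 𝕜 M : Type*}

def rowOnes [DecidableEq m] [Zero 𝕜] [One 𝕜] (i : m) : Matrix m n 𝕜 :=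
  of fun k _ => if k = i then 1 else 0

def colOnes [DecidableEq n] [Zero 𝕜] [One 𝕜] (j : n) : Matrix m n 𝕜 :=
  of fun _ l => if l = j then 1 else 0

theorem add_eq_add_of_forall_perm_sum_eq [Fintype n] [DecidableEq n] [AddCommGroup M]
    {A : Matrix n n M} {c : M} (h : ∀ σ : Perm n, ∑ k, A k (σ k) = c) (i i' j j' : n) :
    A i j + A i' j' = A i j' + A i' j := by
  rcases eq_or_ne i i' with rfl | hi
  · exact add_comm _ _
  rcases eq_or_ne j j' with rfl | hj
  · rfl
  obtain ⟨σ, hσi, hσi'⟩ := Perm.exists_apply_eq_and_apply_eq_s17 hi hj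
  have hswap : ∑ k, (A k (σ k) - A k (σ (Equiv.swap i i' k))) = 0 := by
    rw [sum_sub_distrib, h σ, ← h ((Equiv.swap i i').trans σ), sub_eq_zero]
    rfl
  rw [Fintype.sum_eq_add i i' hi fun k hk => by rw [swap_apply_of_ne_of_ne hk.1 hk.2, sub_self],
    swap_apply_left, swap_apply_right, hσi, hσi', sub_add_sub_comm, sub_eq_zero] at hswap
  exact hswap

theorem exists_nonneg_eq_add_of_add_eq_add [Fintype m] [AddCommGroup M] [LinearOrder M]
    [IsOrderedAddMonoid M] [Nonempty m] [Nonempty n] {A : Matrix m n M} (hA : ∀ i j, 0 ≤ A i j)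
    (hcross : ∀ i i' j j', A i j + A i' j' = A i j' + A i' j) :
    ∃ a : m → M, ∃ b : n → M, 0 ≤ a ∧ 0 ≤ b ∧ ∀ i j, A i j = a i + b j := by
  let j₀ := Classical.arbitrary n
  obtain ⟨i₀, -, hi₀⟩ := exists_min_image univ (fun i => A i j₀) univ_nonempty
  refine ⟨fun i => A i j₀ - A i₀ j₀, fun j => A i₀ j,
    fun i => sub_nonneg.2 (hi₀ i (mem_univ _)), fun j => hA i₀ j, fun i j => ?_⟩
  rw [sub_add_eq_add_sub, ← hcross i i₀ j j₀, add_sub_cancel_right]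

theorem of_add_mem_convexHull [Fintype m] [Fintype n] [DecidableEq m] [DecidableEq n]
    [Field 𝕜] [LinearOrder 𝕜] [IsStrictOrderedRing 𝕜]
    {a : m → 𝕜} {b : n → 𝕜} (ha : 0 ≤ a) (hb : 0 ≤ b) (hab : ∑ i, a i + ∑ j, b j = 1) :
    of (fun i j => a i + b j) ∈ convexHull 𝕜 (range rowOnes ∪ range colOnes) := by
  have hsum : of (fun i j => a i + b j) =
      ∑ p : m ⊕ n, Sum.elim a b p • Sum.elim rowOnes colOnes p := by
    ext k l
    simp [Fintype.sum_sum_type, rowOnes, colOnes, Matrix.sum_apply]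
  rw [hsum]
  refine (convex_convexHull 𝕜 _).sum_mem (fun p _ => ?_) (by simpa [Fintype.sum_sum_type])
    fun p _ => subset_convexHull 𝕜 _ ?_
  · cases p
    exacts [ha _, hb _]
  · cases p <;> simp

theorem perm_sum_eq_one_of_mem_convexHull [Fintype n] [DecidableEq n] [Semiring 𝕜]
    [PartialOrder 𝕜] [IsOrderedRing 𝕜] {A : Matrix n n 𝕜}
    (hA : A ∈ convexHull 𝕜 (range rowOnes ∪ range colOnes)) (σ : Perm n) : ∑ k, A k (σ k) = 1 := by
  have hlin : IsLinearMap 𝕜 fun B : Matrix n n 𝕜 => ∑ k, B k (σ k) :=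
    ⟨fun B B' => by simp [sum_add_distrib], fun c B => by simp [mul_sum]⟩
  refine convexHull_min ?_ (convex_hyperplane hlin 1) hA
  rintro _ (⟨i, rfl⟩ | ⟨j, rfl⟩)
  · simp [rowOnes]
  · simp [colOnes, ← eq_symm_apply]

theorem forall_perm_sum_eq_one_iff_mem_convexHull [Fintype n] [DecidableEq n] [Field 𝕜]
    [LinearOrder 𝕜] [IsStrictOrderedRing 𝕜] {A : Matrix n n 𝕜} (hA : ∀ i j, 0 ≤ A i j) :
    (∀ σ : Perm n, ∑ k, A k (σ k) = 1) ↔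
      A ∈ convexHull 𝕜 (range rowOnes ∪ range colOnes) := by
  refine ⟨fun h => ?_, perm_sum_eq_one_of_mem_convexHull⟩
  have hdiag : ∑ k, A k k = 1 := h 1
  have : Nonempty n := univ_nonempty_iff.mp (nonempty_of_sum_ne_zero (hdiag ▸ one_ne_zero))
  obtain ⟨a, b, ha, hb, hAab⟩ :=
    exists_nonneg_eq_add_of_add_eq_add hA (add_eq_add_of_forall_perm_sum_eq h)
  have hab : ∑ i, a i + ∑ j, b j = 1 := by
    rw [← sum_add_distrib, ← hdiag]
    simp [hAab]
  convert of_add_mem_convexHull ha hb hab using 1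
  exact ext hAab

end Matrix

open Matrix in
theorem stmt_17_general (d : ℕ)
    (R C : Fin d → Matrix (Fin d) (Fin d) ℝ)
    (hR : ∀ i k l, R i k l = if k = i then 1 else 0)
    (hC : ∀ j k l, C j k l = if l = j then 1 else 0)
    (A : Matrix (Fin d) (Fin d) ℝ) (hpos : ∀ i j, 0 ≤ A i j) :
    (∀ σ : Equiv.Perm (Fin d),
        ∑ i, ∑ j, A i j * (if σ i = j then 1 else 0) = 1) ↔
      A ∈ convexHull ℝ (Set.range R ∪ Set.range C) := by
  obtain rfl : R = rowOnes := funext fun i => ext (hR i)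
  obtain rfl : C = colOnes := funext fun j => ext (hC j)
  simp only [mul_ite, mul_one, mul_zero, sum_ite_eq, Finset.mem_univ, if_true]
  exact forall_perm_sum_eq_one_iff_mem_convexHull hpos

theorem stmt_17 (d : ℕ) (hd : 2 ≤ d)
    (R C : Fin d → Matrix (Fin d) (Fin d) ℝ)
    (hR : ∀ i k l, R i k l = if k = i then 1 else 0)
    (hC : ∀ j k l, C j k l = if l = j then 1 else 0)
    (A : Matrix (Fin d) (Fin d) ℝ) (hpos : ∀ i j, 0 ≤ A i j) :
    (∀ σ : Equiv.Perm (Fin d),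
        ∑ i, ∑ j, A i j * (if σ i = j then 1 else 0) = 1) ↔
      A ∈ convexHull ℝ (Set.range R ∪ Set.range C) :=
  stmt_17_general d R C hR hC A hpos
end
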